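/- arXiv:2602.13362 — 9 statements merged into one kernel-verified Lean document; each statement's English description precedes it below -/
import Mathlib

section
/- Calibration–sharpness decomposition: Let S be a strictly proper scoring rule with induced generalized entropy H, divergence d, and generalized conditional mutual information I. Let X, Y, Q be jointly distributed random variables on a probability space, where X is a feature, Y a target taking values in a measurable space, and Q a random probability measure on the target space (a probabilistic prediction), such that Y and Q are conditionally independent given X. Then the expected score decomposes as E[S(Q,Y)] = E[d(P_{Y|Q}, Q)] + I(Y; X | Q) + E[H(P_{Y|X})], where P_{Y|Q} and P_{Y|X} are regular conditional distributions of Y given Q and given X, respectively. -/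
open MeasureTheory ProbabilityTheory

noncomputable section

/-- Generalized entropy induced by a scoring rule `S`: `H(q) = ∫ S(q,y) dq(y)`. -/
def gEntropy {𝒴 : Type*} [MeasurableSpace 𝒴] (S : Measure 𝒴 → 𝒴 → ℝ) (q : Measure 𝒴) : ℝ :=
  ∫ y, S q y ∂q

/-- Divergence induced by `S`: `d(p,q) = ∫ S(q,y) dp(y) − H(p)`. -/
def gDiv {𝒴 : Type*} [MeasurableSpace 𝒴] (S : Measure 𝒴 → 𝒴 → ℝ) (p q : Measure 𝒴) : ℝ :=
  ∫ y, S q y ∂p - gEntropy S p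

/-- A (negatively oriented) scoring rule is proper if the expected score is minimized by the
true distribution. -/
def IsProper {𝒴 : Type*} [MeasurableSpace 𝒴] (S : Measure 𝒴 → 𝒴 → ℝ) : Prop :=
  ∀ p q : Measure 𝒴, IsProbabilityMeasure p → IsProbabilityMeasure q →
    ∫ y, S p y ∂p ≤ ∫ y, S q y ∂p

/-- A scoring rule is strictly proper if it is proper and the minimum is uniquely attained at
the true distribution. -/
def IsStrictlyProper {𝒴 : Type*} [MeasurableSpace 𝒴] (S : Measure 𝒴 → 𝒴 → ℝ) : Prop :=
  IsProper S ∧ ∀ p q : Measure 𝒴, IsProbabilityMeasure p → IsProbabilityMeasure q →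
    q ≠ p → ∫ y, S p y ∂p < ∫ y, S q y ∂p

/-- Generalized conditional mutual information `I(V; W | Z)` induced by the generalized
entropy of `S`: the expected reduction of entropy
`E[H(P_{V|Z}) − H(P_{V|(W,Z)})]`, where the regular conditional distributions are given by
`condDistrib`. -/
def gCondMutualInfo {Ω 𝒴 𝒲 𝒵 : Type*} [MeasurableSpace Ω] [MeasurableSpace 𝒴]
    [StandardBorelSpace 𝒴] [Nonempty 𝒴] [MeasurableSpace 𝒲] [MeasurableSpace 𝒵]
    (S : Measure 𝒴 → 𝒴 → ℝ) (μ : Measure Ω) [IsFiniteMeasure μ]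
    (V : Ω → 𝒴) (W : Ω → 𝒲) (Z : Ω → 𝒵) : ℝ :=
  ∫ ω, (gEntropy S (condDistrib V Z μ (Z ω))
      - gEntropy S (condDistrib V (fun ω' => (W ω', Z ω')) μ (W ω, Z ω))) ∂μ

/-!
Disintegrating along `Q`, the expected score is `E[∫ S(Q, y) dP_{Y|Q}(y)]`, which splits as
`E[d(P_{Y|Q}, Q)] + E[H(P_{Y|Q})]`. Conditional independence of `Y` and `Q` given `X` means
`P_{Y|(X,Q)} = P_{Y|X}` almost surely, so `I(Y; X | Q) = E[H(P_{Y|Q})] - E[H(P_{Y|X})]`, and the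
decomposition is linear bookkeeping.

Since `S` is an arbitrary function, the delicate point is measurability: a.e. strong
measurability of `S(Q, Y)` on `Ω` has to be transferred to the law of `(Q, Y)`. This works because
probability measures on a standard Borel space are separated by countably many measurable sets,
so the disintegration of `μ` along `(Q, Y)` almost surely charges a single fibre.
-/

open MeasureTheory ProbabilityTheory MeasurableSpace Set

theorem HasCountableSeparatingOn.of_measurable_injOn {α β : Type*} [MeasurableSpace α]
    [MeasurableSpace β] [CountablySeparated β] {f : α → β} (hf : Measurable f) {t : Set α}
    (hinj : InjOn f t) :
    HasCountableSeparatingOn α MeasurableSet t := by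
  obtain ⟨S, hSc, hSm, hS⟩ := _root_.exists_countable_separating β MeasurableSet univ
  refine ⟨⟨preimage f '' S, hSc.image _, forall_mem_image.2 fun s hs ↦ hf (hSm s hs), ?_⟩⟩
  exact fun x hx y hy hxy ↦ hinj hx hy <|
    hS _ trivial _ trivial fun s hs ↦ hxy _ (mem_image_of_mem _ hs)

section StandardBorel

variable {𝒴 : Type*} [MeasurableSpace 𝒴] [StandardBorelSpace 𝒴]

theorem MeasureTheory.Measure.ext_of_embeddingReal_preimage_Iic_rat {m m' : Measure 𝒴}
    [IsFiniteMeasure m] (huniv : m univ = m' univ)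
    (h : ∀ q : ℚ, m (embeddingReal 𝒴 ⁻¹' Iic (q : ℝ)) = m' (embeddingReal 𝒴 ⁻¹' Iic (q : ℝ))) :
    m = m' := by
  refine ext_of_generate_finite (preimage (embeddingReal 𝒴) '' ⋃ q : ℚ, {Iic (q : ℝ)}) ?_
    (Real.isPiSystem_Iic_rat.comap _) ?_ huniv
  · rw [← comap_generateFrom, ← Real.borel_eq_generateFrom_Iic_rat, ← BorelSpace.measurable_eq,
      (measurableEmbedding_embeddingReal 𝒴).comap_eq]
  · rintro _ ⟨_, hs, rfl⟩
    obtain ⟨q, rfl⟩ : ∃ q : ℚ, Iic (q : ℝ) = _ := by simpa using hs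
    exact h q

theorem measurable_measure_embeddingReal_preimage_Iic_rat :
    Measurable fun (m : Measure 𝒴) (q : ℚ) ↦ m (embeddingReal 𝒴 ⁻¹' Iic (q : ℝ)) :=
  measurable_pi_lambda _ fun _ ↦ Measure.measurable_coe
    ((measurableEmbedding_embeddingReal 𝒴).measurable measurableSet_Iic)

theorem injOn_measure_embeddingReal_preimage_Iic_rat :
    InjOn (fun (m : Measure 𝒴) (q : ℚ) ↦ m (embeddingReal 𝒴 ⁻¹' Iic (q : ℝ)))
      {m | IsProbabilityMeasure m} := by
  intro m (hm : IsProbabilityMeasure m) m' (hm' : IsProbabilityMeasure m') h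
  exact Measure.ext_of_embeddingReal_preimage_Iic_rat (by simp) (congrFun h)

instance {γ : Type*} [MeasurableSpace γ] [StandardBorelSpace γ] :
    HasCountableSeparatingOn (Measure 𝒴 × γ) MeasurableSet
      ({m | IsProbabilityMeasure m} ×ˢ univ) :=
  HasCountableSeparatingOn.of_measurable_injOn
    (measurable_measure_embeddingReal_preimage_Iic_rat.prodMap measurable_id)
    (injOn_measure_embeddingReal_preimage_Iic_rat.prodMap (injOn_id univ))

end StandardBorel

section Disintegration

variable {Ω β E : Type*} [MeasurableSpace Ω] [StandardBorelSpace Ω] [Nonempty Ω]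
  [MeasurableSpace β] [NormedAddCommGroup E] [NormedSpace ℝ E] [CompleteSpace E]
  {μ : Measure Ω} [IsFiniteMeasure μ] {Z : Ω → β}

/-- Disintegrating `μ` along `Z`, almost every fibre measure `condDistrib id Z μ z` lives on
`Z ⁻¹' {z}`, where `f ∘ Z` is the constant `f z`; averaging a measurable version of `f ∘ Z`
over the fibres thus gives a measurable version of `f`. -/
theorem aestronglyMeasurable_map_of_comp (hZ : Measurable Z) {t : Set β}
    [HasCountableSeparatingOn β MeasurableSet t] (ht : MeasurableSet t) (hZt : ∀ᵐ ω ∂μ, Z ω ∈ t)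
    {f : β → E} (hf : AEStronglyMeasurable (f ∘ Z) μ) :
    AEStronglyMeasurable f (μ.map Z) := by
  obtain ⟨S, hSc, hSm, hS⟩ := exists_countable_separating β MeasurableSet t
  set g := hf.mk (f ∘ Z)
  set N := toMeasurable μ {ω | f (Z ω) ≠ g ω}
  have hN : ∀ᵐ ω ∂μ, ω ∉ N := by
    rw [← measure_eq_zero_iff_ae_notMem, measure_toMeasurable]
    exact ae_iff.mp hf.ae_eq_mk
  let G : Set (β × Ω) := t ×ˢ (Z ⁻¹' t \ N) ∩ ⋂ s ∈ S, {p | p.1 ∈ s ↔ Z p.2 ∈ s}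
  have hG_meas : MeasurableSet G :=
    (ht.prod ((hZ ht).diff (measurableSet_toMeasurable μ _))).inter <|
      .biInter hSc fun s hs ↦ (measurable_fst (hSm s hs)).iff (hZ.comp measurable_snd (hSm s hs))
  have hG : ∀ᵐ p ∂(μ.map Z ⊗ₘ condDistrib id Z μ), p ∈ G := by
    rw [compProd_map_condDistrib aemeasurable_id]
    refine (ae_map_iff (hZ.prodMk measurable_id).aemeasurable hG_meas).mpr ?_
    filter_upwards [hZt, hN] with ω hωt hωN
    exact ⟨⟨hωt, hωt, hωN⟩, mem_iInter₂.mpr fun _ _ ↦ Iff.rfl⟩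
  have hfg : f =ᵐ[μ.map Z] fun z ↦ ∫ ω, g ω ∂condDistrib id Z μ z := by
    filter_upwards [Measure.ae_ae_of_ae_compProd hG] with z hz
    have hg_const : ∀ᵐ ω ∂condDistrib id Z μ z, g ω = f z := by
      filter_upwards [hz] with ω ⟨⟨hzt, hωt, hωN⟩, hsep⟩
      obtain rfl : Z ω = z := hS _ hωt _ hzt fun s hs ↦ (mem_iInter₂.mp hsep s hs).symm
      by_contra hne
      exact hωN (subset_toMeasurable μ _ (Ne.symm hne))
    rw [integral_congr_ae hg_const, integral_const, probReal_univ, one_smul]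
  exact hf.stronglyMeasurable_mk.integral_kernel.aestronglyMeasurable.congr hfg.symm

end Disintegration

theorem integral_eq_integral_integral_condDistrib {Ω 𝒳 𝒴 F : Type*} [MeasurableSpace Ω]
    [MeasurableSpace 𝒳] [MeasurableSpace 𝒴] [StandardBorelSpace 𝒴] [Nonempty 𝒴]
    [NormedAddCommGroup F] [NormedSpace ℝ F] [CompleteSpace F] {μ : Measure Ω} [IsFiniteMeasure μ]
    {X : Ω → 𝒳} {Y : Ω → 𝒴} {f : 𝒳 × 𝒴 → F} (hX : Measurable X) (hY : AEMeasurable Y μ)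
    (hf : AEStronglyMeasurable f (μ.map fun ω ↦ (X ω, Y ω)))
    (hf_int : Integrable (fun ω ↦ f (X ω, Y ω)) μ) :
    ∫ ω, f (X ω, Y ω) ∂μ = ∫ ω, ∫ y, f (X ω, y) ∂condDistrib Y X μ (X ω) ∂μ :=
  (integral_condExp hX.comap_le).symm.trans <|
    integral_congr_ae (condExp_prod_ae_eq_integral_condDistrib₀ hX hY hf hf_int)

section CondDistrib

variable {Ω 𝒳 𝒴 M : Type*} [MeasurableSpace Ω] [StandardBorelSpace Ω]
  [MeasurableSpace 𝒳] [MeasurableSpace 𝒴] [StandardBorelSpace 𝒴] [Nonempty 𝒴] [MeasurableSpace M]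
  {μ : Measure Ω} [IsFiniteMeasure μ] {X : Ω → 𝒳} {Y : Ω → 𝒴} {Q : Ω → M}

/-- `Q` need not take values in a standard Borel space, but the `Prop`-valued event `Q ∈ u` does,
so conditional independence can be read off conditional distributions given `(X, Q ∈ u)`. -/
theorem measure_inter_preimage_eq_setLIntegral_condDistrib (hX : Measurable X) (hY : Measurable Y)
    (hQ : Measurable Q) (hCI : Y ⟂ᵢ[X, hX; μ] Q) {s : Set 𝒳} {u : Set M} {t : Set 𝒴}
    (hs : MeasurableSet s) (hu : MeasurableSet u) (ht : MeasurableSet t) :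
    μ (X ⁻¹' s ∩ Q ⁻¹' u ∩ Y ⁻¹' t)
      = ∫⁻ ω in X ⁻¹' s ∩ Q ⁻¹' u, condDistrib Y X μ (X ω) t ∂μ := by
  have hu' : Measurable (· ∈ u) := measurable_mem.mpr hu
  have hXB : Measurable fun ω ↦ (X ω, Q ω ∈ u) := hX.prodMk (hu'.comp hQ)
  have hpre : X ⁻¹' s ∩ Q ⁻¹' u = (fun ω ↦ (X ω, Q ω ∈ u)) ⁻¹' (s ×ˢ {True}) := by
    ext ω; simp
  have hcond : condDistrib Y (fun ω ↦ (X ω, Q ω ∈ u)) μ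
      =ᵐ[μ.map fun ω ↦ (X ω, Q ω ∈ u)] (condDistrib Y X μ).prodMkRight Prop :=
    (condIndepFun_iff_condDistrib_prod_ae_eq_prodMkRight hY (hu'.comp hQ) hX).mp
    (hCI.comp measurable_id hu').symm
  rw [hpre, ← setLIntegral_preimage_condDistrib hXB hY.aemeasurable ht
    (hs.prod (measurableSet_singleton True))]
  refine setLIntegral_congr_fun_ae (hXB (hs.prod (measurableSet_singleton True))) ?_
  filter_upwards [ae_of_ae_map hXB.aemeasurable hcond] with ω hω _
  rw [hω, Kernel.prodMkRight_apply]

theorem condDistrib_prod_ae_eq_of_condIndepFun (hX : Measurable X) (hY : Measurable Y)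
    (hQ : Measurable Q) (hCI : Y ⟂ᵢ[X, hX; μ] Q) :
    ∀ᵐ ω ∂μ, condDistrib Y (fun ω ↦ (X ω, Q ω)) μ (X ω, Q ω) = condDistrib Y X μ (X ω) := by
  have hXQ : Measurable fun ω ↦ (X ω, Q ω) := hX.prodMk hQ
  have hjoint : μ.map (fun ω ↦ ((X ω, Q ω), Y ω))
      = μ.map (fun ω ↦ (X ω, Q ω)) ⊗ₘ (condDistrib Y X μ).prodMkRight M := by
    refine Measure.ext_prod₃_iff'.mpr fun {s u t} hs hu ht ↦ ?_
    rw [Measure.map_apply (hXQ.prodMk hY) ((hs.prod hu).prod ht),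
      Measure.compProd_apply_prod (hs.prod hu) ht,
      setLIntegral_map (hs.prod hu) (Kernel.measurable_coe _ ht) hXQ]
    exact measure_inter_preimage_eq_setLIntegral_condDistrib hX hY hQ hCI hs hu ht
  filter_upwards [ae_of_ae_map hXQ.aemeasurable
    (condDistrib_ae_eq_of_measure_eq_compProd _ hY.aemeasurable hjoint)] with ω hω
  rw [hω, Kernel.prodMkRight_apply]

end CondDistrib

theorem gDiv_add_gEntropy {𝒴 : Type*} [MeasurableSpace 𝒴] (S : Measure 𝒴 → 𝒴 → ℝ)
    (p q : Measure 𝒴) : gDiv S p q + gEntropy S p = ∫ y, S q y ∂p :=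
  sub_add_cancel _ _

theorem calibration_sharpness_decomposition_general
    {Ω 𝒳 𝒴 : Type*} [MeasurableSpace Ω] [StandardBorelSpace Ω] [Nonempty Ω]
    [MeasurableSpace 𝒳] [MeasurableSpace 𝒴] [StandardBorelSpace 𝒴] [Nonempty 𝒴]
    (μ : Measure Ω) [IsProbabilityMeasure μ]
    (S : Measure 𝒴 → 𝒴 → ℝ)
    (X : Ω → 𝒳) (Y : Ω → 𝒴) (Q : Ω → Measure 𝒴)
    (hX : Measurable X) (hY : Measurable Y) (hQ : Measurable Q)
    (hQprob : ∀ ω, IsProbabilityMeasure (Q ω))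
    -- `Y` and `Q` are conditionally independent given `X`
    (hCI : CondIndepFun (MeasurableSpace.comap X inferInstance) hX.comap_le Y Q μ)
    -- all integrals appearing are assumed to be well defined and finite
    (hint_score : Integrable (fun ω => S (Q ω) (Y ω)) μ)
    (hint_div : Integrable (fun ω => gDiv S (condDistrib Y Q μ (Q ω)) (Q ω)) μ)
    (hint_entQ : Integrable (fun ω => gEntropy S (condDistrib Y Q μ (Q ω))) μ)
    (hint_entXQ : Integrable
      (fun ω => gEntropy S (condDistrib Y (fun ω' => (X ω', Q ω')) μ (X ω, Q ω))) μ) :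
    ∫ ω, S (Q ω) (Y ω) ∂μ
      = ∫ ω, gDiv S (condDistrib Y Q μ (Q ω)) (Q ω) ∂μ
        + gCondMutualInfo S μ Y X Q
        + ∫ ω, gEntropy S (condDistrib Y X μ (X ω)) ∂μ := by
  have hS_meas : AEStronglyMeasurable (fun z : Measure 𝒴 × 𝒴 ↦ S z.1 z.2)
      (μ.map fun ω ↦ (Q ω, Y ω)) :=
    aestronglyMeasurable_map_of_comp (hQ.prodMk hY)
      (ProbabilityMeasure.measurableSet_isProbabilityMeasure.prod .univ)
      (ae_of_all _ fun ω ↦ ⟨hQprob ω, trivial⟩) hint_score.1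
  have hscore := integral_eq_integral_integral_condDistrib hQ hY.aemeasurable hS_meas hint_score
  dsimp only at hscore
  have hentXQ : ∀ᵐ ω ∂μ, gEntropy S (condDistrib Y (fun ω' ↦ (X ω', Q ω')) μ (X ω, Q ω))
      = gEntropy S (condDistrib Y X μ (X ω)) :=
    (condDistrib_prod_ae_eq_of_condIndepFun hX hY hQ hCI).mono fun ω h ↦ by rw [h]
  have hsplit := integral_add hint_div hint_entQ
  simp only [gDiv_add_gEntropy] at hsplit
  rw [hscore, hsplit, gCondMutualInfo, integral_sub hint_entQ hint_entXQ,
    integral_congr_ae hentXQ]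
  ring

/-- **Calibration–sharpness decomposition.**
For a strictly proper scoring rule `S` and jointly distributed feature `X`, target `Y` and
probabilistic prediction `Q` (a random probability measure on the target space) such that
`Y` and `Q` are conditionally independent given `X`,
`E[S(Q,Y)] = E[d(P_{Y|Q}, Q)] + I(Y; X | Q) + E[H(P_{Y|X})]`. -/
theorem calibration_sharpness_decomposition
    {Ω 𝒳 𝒴 : Type*} [MeasurableSpace Ω] [StandardBorelSpace Ω] [Nonempty Ω]
    [MeasurableSpace 𝒳] [MeasurableSpace 𝒴] [StandardBorelSpace 𝒴] [Nonempty 𝒴]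
    (μ : Measure Ω) [IsProbabilityMeasure μ]
    (S : Measure 𝒴 → 𝒴 → ℝ) (hS : IsStrictlyProper S)
    (X : Ω → 𝒳) (Y : Ω → 𝒴) (Q : Ω → Measure 𝒴)
    (hX : Measurable X) (hY : Measurable Y) (hQ : Measurable Q)
    (hQprob : ∀ ω, IsProbabilityMeasure (Q ω))
    -- `Y` and `Q` are conditionally independent given `X`
    (hCI : CondIndepFun (MeasurableSpace.comap X inferInstance) hX.comap_le Y Q μ)
    -- all integrals appearing are assumed to be well defined and finite
    (hint_score : Integrable (fun ω => S (Q ω) (Y ω)) μ)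
    (hint_div : Integrable (fun ω => gDiv S (condDistrib Y Q μ (Q ω)) (Q ω)) μ)
    (hint_entQ : Integrable (fun ω => gEntropy S (condDistrib Y Q μ (Q ω))) μ)
    (hint_entXQ : Integrable
      (fun ω => gEntropy S (condDistrib Y (fun ω' => (X ω', Q ω')) μ (X ω, Q ω))) μ)
    (hint_entX : Integrable (fun ω => gEntropy S (condDistrib Y X μ (X ω))) μ) :
    ∫ ω, S (Q ω) (Y ω) ∂μ
      = ∫ ω, gDiv S (condDistrib Y Q μ (Q ω)) (Q ω) ∂μ
        + gCondMutualInfo S μ Y X Q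
        + ∫ ω, gEntropy S (condDistrib Y X μ (X ω)) ∂μ :=
  calibration_sharpness_decomposition_general μ S X Y Q hX hY hQ hQprob hCI hint_score hint_div
    hint_entQ hint_entXQ
end
end

section
/- Conditional entropy chain rule for predictions: Let S be a scoring rule with induced generalized entropy H and generalized conditional mutual information I. Let X, Y, Q be jointly distributed random variables, with Q a random probability measure on the target space, such that Y and Q are conditionally independent given X (so that P_{Y|Q,X} = P_{Y|X} almost surely). Then E[H(P_{Y|Q})] = I(Y; X | Q) + E[H(P_{Y|X})], where P_{Y|Q} and P_{Y|X} are regular conditional distributions of Y given Q and given X. -/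
open MeasureTheory ProbabilityTheory

noncomputable section

/-- **Conditional entropy chain rule for predictions.**
If `Y` and `Q` are conditionally independent given `X`, so that
`P_{Y|(X,Q)} = P_{Y|X}` almost surely, then
`E[H(P_{Y|Q})] = I(Y; X | Q) + E[H(P_{Y|X})]`. -/
theorem conditional_entropy_chain_rule
    {Ω 𝒳 𝒴 : Type*} [MeasurableSpace Ω]
    [MeasurableSpace 𝒳] [MeasurableSpace 𝒴] [StandardBorelSpace 𝒴] [Nonempty 𝒴]
    (μ : Measure Ω) [IsProbabilityMeasure μ]
    (S : Measure 𝒴 → 𝒴 → ℝ)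
    (X : Ω → 𝒳) (Y : Ω → 𝒴) (Q : Ω → Measure 𝒴)
    (hX : Measurable X) (hY : Measurable Y) (hQ : Measurable Q)
    (hQprob : ∀ ω, IsProbabilityMeasure (Q ω))
    -- conditional independence of `Y` and `Q` given `X`: `P_{Y|(X,Q)} = P_{Y|X}` a.s.
    (hCI : ∀ᵐ ω ∂μ,
      condDistrib Y (fun ω' => (X ω', Q ω')) μ (X ω, Q ω) = condDistrib Y X μ (X ω))
    -- all integrals appearing are assumed to be well defined and finite
    (hint_entQ : Integrable (fun ω => gEntropy S (condDistrib Y Q μ (Q ω))) μ)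
    (hint_entXQ : Integrable
      (fun ω => gEntropy S (condDistrib Y (fun ω' => (X ω', Q ω')) μ (X ω, Q ω))) μ)
    (hint_entX : Integrable (fun ω => gEntropy S (condDistrib Y X μ (X ω))) μ) :
    ∫ ω, gEntropy S (condDistrib Y Q μ (Q ω)) ∂μ
      = gCondMutualInfo S μ Y X Q
        + ∫ ω, gEntropy S (condDistrib Y X μ (X ω)) ∂μ := by
  have hEq : ∫ ω, gEntropy S (condDistrib Y (fun ω' => (X ω', Q ω')) μ (X ω, Q ω)) ∂μ
      = ∫ ω, gEntropy S (condDistrib Y X μ (X ω)) ∂μ :=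
    integral_congr_ae (hCI.mono fun ω h => by dsimp only; rw [h])
  rw [gCondMutualInfo, integral_sub hint_entQ hint_entXQ, hEq]
  ring
end
end

section
/- Auto-calibration of conditional laws (tower-property claim): Let Y be a target random variable taking values in a measurable space, let Z be any random variable jointly distributed with Y, and define the random probability measure W = P_{Y|Z}, a regular conditional distribution of Y given Z (so W is a measurable function of Z). Then W is auto-calibrated: P_{Y|W} = W almost surely, where P_{Y|W} is a regular conditional distribution of Y given W. -/
open MeasureTheory ProbabilityTheory

/-!
Write `W = κ ∘ Z` with `κ = P_{Y|Z}`. Since `κ z` is a probability measure, `κ = id ∘ κ` with `id`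
the identity kernel on probability measures, so the conditional law of `Y` given `Z` depends on
`Z` only through `W`. By the tower property it is then also the conditional law of `Y` given `W`,
namely `id` evaluated at `W`.
-/

noncomputable section

namespace ProbabilityTheory

variable {Ω β γ δ : Type*} {mΩ : MeasurableSpace Ω} {mβ : MeasurableSpace β}
  {mγ : MeasurableSpace γ} {mδ : MeasurableSpace δ}

lemma Measure.map_prodMap_compProd_comap (ν : Measure β) [IsFiniteMeasure ν]
    {f : β → γ} (hf : Measurable f) (η : Kernel γ δ) [IsFiniteKernel η] :
    (ν ⊗ₘ η.comap f hf).map (Prod.map f id) = ν.map f ⊗ₘ η := by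
  refine Measure.ext_prod fun {s t} hs ht ↦ ?_
  rw [Measure.map_apply (hf.prodMap measurable_id) (hs.prod ht), Set.preimage_prod_map_prod,
    Set.preimage_id, Measure.compProd_apply_prod (hf hs) ht, Measure.compProd_apply_prod hs ht,
    setLIntegral_map hs (η.measurable_coe ht) hf]
  rfl

lemma condDistrib_comp_ae_eq_of_ae_eq_comap [StandardBorelSpace δ] [Nonempty δ]
    {μ : Measure Ω} [IsFiniteMeasure μ] {Y : Ω → δ} {Z : Ω → β}
    (hY : AEMeasurable Y μ) (hZ : Measurable Z) {f : β → γ} (hf : Measurable f)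
    {η : Kernel γ δ} [IsFiniteKernel η] (h : condDistrib Y Z μ =ᵐ[μ.map Z] η.comap f hf) :
    condDistrib Y (f ∘ Z) μ =ᵐ[μ.map (f ∘ Z)] η := by
  refine condDistrib_ae_eq_of_measure_eq_compProd (f ∘ Z) hY ?_
  calc μ.map (fun ω ↦ ((f ∘ Z) ω, Y ω))
      = (μ.map (fun ω ↦ (Z ω, Y ω))).map (Prod.map f id) := by
        rw [AEMeasurable.map_map_of_aemeasurable (by fun_prop) (by fun_prop)]
        rfl
    _ = (μ.map Z ⊗ₘ η.comap f hf).map (Prod.map f id) := by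
        rw [← compProd_map_condDistrib hY, Measure.compProd_congr h]
    _ = μ.map (f ∘ Z) ⊗ₘ η := by
        rw [Measure.map_prodMap_compProd_comap _ hf, Measure.map_map hf hZ]

/-- The identity on probability measures, extended by an arbitrary Dirac mass elsewhere so that
it is a Markov kernel. -/
def Kernel.probMeasureId (δ : Type*) [MeasurableSpace δ] [Nonempty δ] : Kernel (Measure δ) δ where
  toFun m := if m Set.univ = 1 then m else Measure.dirac (Classical.arbitrary δ)
  measurable' :=
    Measurable.ite (Measure.measurable_coe .univ (measurableSet_singleton 1)) measurable_id
      measurable_const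

lemma Kernel.probMeasureId_apply [Nonempty δ] (m : Measure δ) [IsProbabilityMeasure m] :
    probMeasureId δ m = m :=
  if_pos measure_univ

instance [Nonempty δ] : IsMarkovKernel (Kernel.probMeasureId δ) where
  isProbabilityMeasure m := by
    by_cases hm : m Set.univ = 1
    · have : IsProbabilityMeasure m := ⟨hm⟩
      rwa [Kernel.probMeasureId_apply]
    · change IsProbabilityMeasure (ite _ _ _)
      rw [if_neg hm]
      infer_instance

lemma Kernel.comap_probMeasureId [Nonempty δ] (κ : Kernel β δ) [IsMarkovKernel κ] :
    (probMeasureId δ).comap κ κ.measurable = κ := by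
  ext1 b
  exact probMeasureId_apply _

end ProbabilityTheory

/-- **Auto-calibration of conditional laws.**
Let `Y` be a target random variable with values in a standard Borel space, `Z` any random
variable jointly distributed with `Y`, and let `W = P_{Y|Z}` be (a regular conditional
distribution of `Y` given `Z`, evaluated along `Z`, so `W` is a measurable function of `Z`).
Then `W` is auto-calibrated: `P_{Y|W} = W` almost surely. -/
theorem conditional_law_is_auto_calibrated
    {Ω 𝒵 𝒴 : Type*} [MeasurableSpace Ω] [MeasurableSpace 𝒵]
    [MeasurableSpace 𝒴] [StandardBorelSpace 𝒴] [Nonempty 𝒴]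
    (μ : Measure Ω) [IsProbabilityMeasure μ]
    (Y : Ω → 𝒴) (Z : Ω → 𝒵)
    (hY : Measurable Y) (hZ : Measurable Z)
    (W : Ω → Measure 𝒴)
    (hW : ∀ ω, W ω = condDistrib Y Z μ (Z ω)) :
    ∀ᵐ ω ∂μ, condDistrib Y W μ (W ω) = W ω := by
  obtain rfl : W = condDistrib Y Z μ ∘ Z := funext hW
  have hW_measurable : Measurable (condDistrib Y Z μ ∘ Z) :=
    (condDistrib Y Z μ).measurable.comp hZ
  have h_tower := condDistrib_comp_ae_eq_of_ae_eq_comap hY.aemeasurable hZ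
    (condDistrib Y Z μ).measurable (η := Kernel.probMeasureId 𝒴)
    (by rw [Kernel.comap_probMeasureId])
  filter_upwards [ae_of_ae_map hW_measurable.aemeasurable h_tower] with ω hω
  exact hω.trans (Kernel.probMeasureId_apply (condDistrib Y Z μ (Z ω)))
end
end

section
/- The recalibrated prediction is auto-calibrated: Let Y be a target random variable taking values in a measurable space and Q a random probability measure on the target space jointly distributed with Y. Define the recalibrated prediction Q̃ = P_{Y|Q}, a regular conditional distribution of Y given Q. Then Q̃ is auto-calibrated: P_{Y|Q̃} = Q̃ almost surely. -/
/-!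
Write `κ = P_{Y|Q}`, so that `Q̃ = κ ∘ Q`. If the conditional law of `Y` given `X` factors as
`η ∘ f`, then `η` is also the conditional law of `Y` given `f ∘ X`: the joint law of `(f ∘ X, Y)`
is the push-forward of `law X ⊗ (η ∘ f)` along `f × id`, which is `law (f ∘ X) ⊗ η`.
Since every `κ q` is a probability measure, `κ` factors as `id ∘ κ`, so `P_{Y|κ ∘ Q}` is the
identity on probability measures.
-/

open MeasureTheory ProbabilityTheory

section Factorization

variable {α β γ Ω : Type*} {mα : MeasurableSpace α} {mβ : MeasurableSpace β}
  {mγ : MeasurableSpace γ} {mΩ : MeasurableSpace Ω}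

lemma MeasureTheory.Measure.map_prodMap_compProd_comap (μ : Measure β) [IsFiniteMeasure μ]
    (η : Kernel γ Ω) [IsFiniteKernel η] {f : β → γ} (hf : Measurable f) :
    (μ ⊗ₘ η.comap f hf).map (Prod.map f id) = μ.map f ⊗ₘ η := by
  refine Measure.ext_prod fun {s t} hs ht => ?_
  rw [Measure.map_apply (hf.prodMap measurable_id) (hs.prod ht), Set.preimage_prod_map_prod,
    Set.preimage_id, Measure.compProd_apply_prod (hf hs) ht, Measure.compProd_apply_prod hs ht,
    setLIntegral_map hs (η.measurable_coe ht) hf]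
  rfl

lemma ProbabilityTheory.condDistrib_comp_ae_eq_of_ae_eq_comap_s4 [StandardBorelSpace Ω]
    [Nonempty Ω] {μ : Measure α} [IsFiniteMeasure μ] {X : α → β} {Y : α → Ω}
    (hX : Measurable X) (hY : AEMeasurable Y μ) {f : β → γ} (hf : Measurable f)
    {η : Kernel γ Ω} [IsFiniteKernel η] (h : condDistrib Y X μ =ᵐ[μ.map X] η.comap f hf) :
    condDistrib Y (f ∘ X) μ =ᵐ[μ.map (f ∘ X)] η := by
  refine condDistrib_ae_eq_of_measure_eq_compProd _ hY ?_
  calc μ.map (fun a => ((f ∘ X) a, Y a))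
      = (μ.map fun a => (X a, Y a)).map (Prod.map f id) := by
        rw [AEMeasurable.map_map_of_aemeasurable (by fun_prop) (hX.aemeasurable.prodMk hY)]
        rfl
    _ = (μ.map X ⊗ₘ η.comap f hf).map (Prod.map f id) := by
        rw [← compProd_map_condDistrib hY, Measure.compProd_congr h]
    _ = μ.map (f ∘ X) ⊗ₘ η := by
        rw [Measure.map_prodMap_compProd_comap, Measure.map_map hf hX]

end Factorization

section ProbId

variable {Ω : Type*} [MeasurableSpace Ω]

/-- The identity on probability measures, extended by `dirac y₀` only to make it Markov. -/
noncomputable def ProbabilityTheory.Kernel.probId (y₀ : Ω) : Kernel (Measure Ω) Ω where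
  toFun m := by
    classical
    exact if IsProbabilityMeasure m then m else Measure.dirac y₀
  measurable' := Measurable.ite ProbabilityMeasure.measurableSet_isProbabilityMeasure
    measurable_id measurable_const

lemma ProbabilityTheory.Kernel.probId_apply (y₀ : Ω) (m : Measure Ω) [IsProbabilityMeasure m] :
    Kernel.probId y₀ m = m :=
  if_pos ‹_›

instance (y₀ : Ω) : IsMarkovKernel (Kernel.probId y₀) where
  isProbabilityMeasure m := by
    by_cases hm : IsProbabilityMeasure m
    · rwa [Kernel.probId_apply]
    · simp only [Kernel.probId, Kernel.coe_mk, if_neg hm]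
      infer_instance

end ProbId

theorem recalibrated_prediction_is_auto_calibrated_general
    {Ω 𝒴 : Type*} [MeasurableSpace Ω]
    [MeasurableSpace 𝒴] [StandardBorelSpace 𝒴] [Nonempty 𝒴]
    (μ : Measure Ω) [IsProbabilityMeasure μ]
    (Y : Ω → 𝒴) (Q : Ω → Measure 𝒴)
    (hY : Measurable Y) (hQ : Measurable Q)
    (Qt : Ω → Measure 𝒴)
    (hQt : ∀ ω, Qt ω = condDistrib Y Q μ (Q ω)) :
    ∀ᵐ ω ∂μ, condDistrib Y Qt μ (Qt ω) = Qt ω := by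
  set κ := condDistrib Y Q μ
  have hQt_eq : Qt = κ ∘ Q := funext hQt
  have h_factor : κ =ᵐ[μ.map Q] (Kernel.probId (Classical.arbitrary 𝒴)).comap κ κ.measurable :=
    .of_forall fun q => (Kernel.probId_apply _ (κ q)).symm
  have h := condDistrib_comp_ae_eq_of_ae_eq_comap_s4 hQ hY.aemeasurable κ.measurable h_factor
  rw [← hQt_eq] at h
  filter_upwards [ae_of_ae_map (hQt_eq ▸ κ.measurable.comp hQ).aemeasurable h] with ω hω
  rw [hω, hQt, Kernel.probId_apply]

/-- **The recalibrated prediction is auto-calibrated.**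
Let `Y` be a target random variable taking values in a standard Borel space and `Q` a random
probability measure on the target space jointly distributed with `Y`. Define the recalibrated
prediction `Q̃ = P_{Y|Q}` (a regular conditional distribution of `Y` given `Q`, evaluated
along `Q`). Then `Q̃` is auto-calibrated: `P_{Y|Q̃} = Q̃` almost surely. -/
theorem recalibrated_prediction_is_auto_calibrated
    {Ω 𝒴 : Type*} [MeasurableSpace Ω]
    [MeasurableSpace 𝒴] [StandardBorelSpace 𝒴] [Nonempty 𝒴]
    (μ : Measure Ω) [IsProbabilityMeasure μ]
    (Y : Ω → 𝒴) (Q : Ω → Measure 𝒴)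
    (hY : Measurable Y) (hQ : Measurable Q)
    (hQprob : ∀ ω, IsProbabilityMeasure (Q ω))
    (Qt : Ω → Measure 𝒴)
    (hQt : ∀ ω, Qt ω = condDistrib Y Q μ (Q ω)) :
    ∀ᵐ ω ∂μ, condDistrib Y Qt μ (Qt ω) = Qt ω :=
  recalibrated_prediction_is_auto_calibrated_general μ Y Q hY hQ Qt hQt
end

section
/- Recalibration preserves sharpness: Let S be a scoring rule with induced generalized entropy H and generalized conditional mutual information I. Let X, Y, Q be jointly distributed random variables, with Q a random probability measure on the target space, such that Y and Q are conditionally independent given X. Define the recalibrated prediction Q̃ = P_{Y|Q}. Then I(Y; X | Q̃) = I(Y; X | Q). -/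
/-!
The two mutual informations have almost surely equal integrands. With `κ = P_{Y|Q}`, the
recalibrated forecast `Q̃ = κ ∘ Q` is calibrated, `P_{Y|Q̃}(Q̃) = Q̃ = P_{Y|Q}(Q)`: `κ` factors
through its own values, `κ = id ∘ κ`, so the joint law of `(Q̃, Y)` is the law of `Q̃` composed
with the identity kernel. And conditional independence of `Y` and `Q` given `X`, which passes to
`Q̃ = κ ∘ Q`, gives `P_{Y|(X,Q)}(X,Q) = P_{Y|X}(X) = P_{Y|(X,Q̃)}(X,Q̃)`.
-/

open MeasureTheory ProbabilityTheory

noncomputable section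

namespace MeasureTheory

open Set

lemma setIntegral_condExp_eq_measureReal_inter {Ω : Type*} {m mΩ : MeasurableSpace Ω}
    {μ : Measure Ω} [IsFiniteMeasure μ] (hm : m ≤ mΩ) {A E F : Set Ω}
    (hA : MeasurableSet[m] A) (hE : MeasurableSet E) (hF : MeasurableSet F)
    (hEF : μ⟦E ∩ F | m⟧ =ᵐ[μ] fun ω => (μ⟦E | m⟧) ω * (μ⟦F | m⟧) ω) :
    ∫ ω in A ∩ F, (μ⟦E | m⟧) ω ∂μ = μ.real (A ∩ F ∩ E) := by
  have hF_int : Integrable (F.indicator fun _ => (1 : ℝ)) μ := (integrable_const 1).indicator hF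
  have h_indicator : F.indicator (μ⟦E | m⟧) = μ⟦E | m⟧ * F.indicator fun _ => (1 : ℝ) := by
    ext ω; by_cases hω : ω ∈ F <;> simp [hω]
  have h_pullOut : μ[F.indicator (μ⟦E | m⟧) | m] =ᵐ[μ] μ⟦E | m⟧ * μ⟦F | m⟧ := by
    rw [h_indicator]
    exact condExp_mul_of_stronglyMeasurable_left stronglyMeasurable_condExp
      (h_indicator ▸ integrable_condExp.indicator hF) hF_int
  calc ∫ ω in A ∩ F, (μ⟦E | m⟧) ω ∂μ
      = ∫ ω in A, μ[F.indicator (μ⟦E | m⟧) | m] ω ∂μ := by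
        rw [setIntegral_condExp hm (integrable_condExp.indicator hF) hA, setIntegral_indicator hF]
    _ = ∫ ω in A, (μ⟦E ∩ F | m⟧) ω ∂μ := by
        refine setIntegral_congr_ae (hm A hA) ?_
        filter_upwards [h_pullOut, hEF] with ω h_pullOut_ω hEF_ω _
        rw [h_pullOut_ω, hEF_ω]
        rfl
    _ = μ.real (A ∩ F ∩ E) := by
        rw [setIntegral_condExp hm ((integrable_const 1).indicator (hE.inter hF)) hA,
          integral_indicator_const _ (hE.inter hF), measureReal_restrict_apply (hE.inter hF),
          smul_eq_mul, mul_one, inter_comm E F, inter_comm, inter_assoc]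

end MeasureTheory

namespace ProbabilityTheory

variable {Ω 𝒳 𝒲 𝒴 : Type*} [MeasurableSpace Ω] [StandardBorelSpace Ω]
  [MeasurableSpace 𝒳] [MeasurableSpace 𝒲] [MeasurableSpace 𝒴] [StandardBorelSpace 𝒴] [Nonempty 𝒴]
  {μ : Measure Ω} [IsFiniteMeasure μ] {X : Ω → 𝒳} {W : Ω → 𝒲} {Y : Ω → 𝒴}

lemma measureReal_inter_preimage_eq_setIntegral_condDistrib_of_condIndepFun
    (hX : Measurable X) (hW : Measurable W) (hY : Measurable Y)
    (hCI : CondIndepFun (MeasurableSpace.comap X inferInstance) hX.comap_le Y W μ)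
    {s : Set 𝒳} {t : Set 𝒲} {u : Set 𝒴}
    (hs : MeasurableSet s) (ht : MeasurableSet t) (hu : MeasurableSet u) :
    μ.real (X ⁻¹' s ∩ W ⁻¹' t ∩ Y ⁻¹' u)
      = ∫ ω in X ⁻¹' s ∩ W ⁻¹' t, (condDistrib Y X μ (X ω)).real u ∂μ := by
  rw [← setIntegral_condExp_eq_measureReal_inter hX.comap_le ⟨s, hs, rfl⟩ (hY hu) (hW ht)
    ((condIndepFun_iff_condExp_inter_preimage_eq_mul hY hW).mp hCI u t hu ht)]
  exact setIntegral_congr_ae ((hX hs).inter (hW ht))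
    (ae_imp_of_ae_restrict (ae_restrict_of_ae (condDistrib_ae_eq_condExp hX hY hu).symm))

theorem condDistrib_prodMk_ae_eq_prodMkRight_of_condIndepFun
    (hX : Measurable X) (hW : Measurable W) (hY : Measurable Y)
    (hCI : CondIndepFun (MeasurableSpace.comap X inferInstance) hX.comap_le Y W μ) :
    condDistrib Y (fun ω => (X ω, W ω)) μ =ᵐ[μ.map fun ω => (X ω, W ω)]
      (condDistrib Y X μ).prodMkRight 𝒲 := by
  have hXW : Measurable fun ω => (X ω, W ω) := hX.prodMk hW
  refine condDistrib_ae_eq_of_measure_eq_compProd _ hY.aemeasurable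
    (Measure.ext_prod₃_iff'.mpr fun {s t u} hs ht hu => ?_)
  rw [← measureReal_eq_measureReal_iff,
    map_measureReal_apply (hXW.prodMk hY) ((hs.prod ht).prod hu), measureReal_def,
    measureReal_def, Measure.compProd_apply_prod (hs.prod ht) hu,
    setLIntegral_map (hs.prod ht) ((condDistrib Y X μ).prodMkRight 𝒲 |>.measurable_coe hu) hXW,
    ← integral_toReal]
  · exact measureReal_inter_preimage_eq_setIntegral_condDistrib_of_condIndepFun
      hX hW hY hCI hs ht hu
  · exact (((condDistrib Y X μ).measurable_coe hu).comp hX).aemeasurable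
  · exact ae_of_all _ fun _ => measure_lt_top _ _

end ProbabilityTheory

namespace ProbabilityTheory.Kernel

/-- The kernel `q ↦ q`, made Markov by sending measures that are not probability measures to an
arbitrary Dirac mass. -/
def tautological (𝒴 : Type*) [MeasurableSpace 𝒴] [Nonempty 𝒴] : Kernel (Measure 𝒴) 𝒴 where
  toFun q := if q Set.univ = 1 then q else Measure.dirac (Classical.arbitrary 𝒴)
  measurable' := Measurable.ite (Measure.measurable_coe .univ (measurableSet_singleton 1))
    measurable_id measurable_const

variable {𝒴 : Type*} [MeasurableSpace 𝒴] [Nonempty 𝒴]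

lemma tautological_apply (q : Measure 𝒴) [IsProbabilityMeasure q] : tautological 𝒴 q = q :=
  if_pos measure_univ

instance : IsMarkovKernel (tautological 𝒴) := by
  refine ⟨fun q => ?_⟩
  by_cases hq : q Set.univ = 1
  · simpa only [tautological, coe_mk, if_pos hq] using (⟨hq⟩ : IsProbabilityMeasure q)
  · simp only [tautological, coe_mk, if_neg hq]; infer_instance

lemma tautological_comap {β : Type*} [MeasurableSpace β] (κ : Kernel β 𝒴) [IsMarkovKernel κ] :
    (tautological 𝒴).comap κ κ.measurable = κ := by
  ext1 b
  rw [comap_apply, tautological_apply]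

end ProbabilityTheory.Kernel

namespace ProbabilityTheory

variable {Ω 𝒵 𝒴 : Type*} {mΩ : MeasurableSpace Ω} [MeasurableSpace 𝒵] [MeasurableSpace 𝒴]
  {μ : Measure Ω} {Y : Ω → 𝒴} {Z : Ω → 𝒵}

lemma hasCondDistrib_condDistrib [StandardBorelSpace 𝒴] [Nonempty 𝒴] [IsFiniteMeasure μ]
    (hZ : AEMeasurable Z μ) (hY : AEMeasurable Y μ) : HasCondDistrib Y Z (condDistrib Y Z μ) μ :=
  ⟨hZ.prodMk hY, (compProd_map_condDistrib hY).symm⟩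

lemma HasCondDistrib.kernel_apply [Nonempty 𝒴] [SFinite μ] {κ : Kernel 𝒵 𝒴} [IsMarkovKernel κ]
    (h : HasCondDistrib Y Z κ μ) :
    HasCondDistrib Y (fun ω => κ (Z ω)) (Kernel.tautological 𝒴) μ :=
  HasCondDistrib.comp_right (f := κ) (hf := κ.measurable) (by rwa [Kernel.tautological_comap])

lemma ae_condDistrib_kernel_apply_eq [StandardBorelSpace 𝒴] [Nonempty 𝒴] [IsFiniteMeasure μ]
    {κ : Kernel 𝒵 𝒴} [IsMarkovKernel κ] (h : HasCondDistrib Y Z κ μ) :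
    ∀ᵐ ω ∂μ, condDistrib Y (fun ω => κ (Z ω)) μ (κ (Z ω)) = κ (Z ω) := by
  have hκZ : AEMeasurable (fun ω => κ (Z ω)) μ := κ.measurable.comp_aemeasurable h.aemeasurable_fst
  have h_ae := condDistrib_ae_eq_of_measure_eq_compProd _ h.aemeasurable_snd h.kernel_apply.map_eq
  filter_upwards [ae_of_ae_map hκZ h_ae] with ω hω
  rw [hω, Kernel.tautological_apply]

end ProbabilityTheory

theorem recalibration_preserves_sharpness_general
    {Ω 𝒳 𝒴 : Type*} [MeasurableSpace Ω] [StandardBorelSpace Ω]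
    [MeasurableSpace 𝒳] [MeasurableSpace 𝒴] [StandardBorelSpace 𝒴] [Nonempty 𝒴]
    (μ : Measure Ω) [IsProbabilityMeasure μ]
    (S : Measure 𝒴 → 𝒴 → ℝ)
    (X : Ω → 𝒳) (Y : Ω → 𝒴) (Q : Ω → Measure 𝒴)
    (hX : Measurable X) (hY : Measurable Y) (hQ : Measurable Q)
    -- `Y` and `Q` are conditionally independent given `X`
    (hCI : CondIndepFun (MeasurableSpace.comap X inferInstance) hX.comap_le Y Q μ)
    (Qt : Ω → Measure 𝒴)
    (hQt : ∀ ω, Qt ω = condDistrib Y Q μ (Q ω)) :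
    gCondMutualInfo S μ Y X Qt = gCondMutualInfo S μ Y X Q := by
  obtain rfl : Qt = fun ω => condDistrib Y Q μ (Q ω) := funext hQt
  have hQt_meas : Measurable fun ω => condDistrib Y Q μ (Q ω) :=
    (condDistrib Y Q μ).measurable.comp hQ
  have h_calib := ae_condDistrib_kernel_apply_eq
    (hasCondDistrib_condDistrib (μ := μ) hQ.aemeasurable hY.aemeasurable)
  have h_indepQ := ae_of_ae_map (hX.prodMk hQ).aemeasurable
    (condDistrib_prodMk_ae_eq_prodMkRight_of_condIndepFun hX hQ hY hCI)
  have h_indepQt := ae_of_ae_map (hX.prodMk hQt_meas).aemeasurable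
    (condDistrib_prodMk_ae_eq_prodMkRight_of_condIndepFun hX hQt_meas hY
      (hCI.comp measurable_id (condDistrib Y Q μ).measurable))
  refine integral_congr_ae ?_
  filter_upwards [h_calib, h_indepQ, h_indepQt] with ω h_calib_ω h_indepQ_ω h_indepQt_ω
  rw [h_calib_ω, h_indepQ_ω, h_indepQt_ω, Kernel.prodMkRight_apply, Kernel.prodMkRight_apply]

/-- **Recalibration preserves sharpness.**
Let `X, Y, Q` be jointly distributed, with `Q` a random probability measure on the target
space, such that `Y` and `Q` are conditionally independent given `X`. Let `Q̃ = P_{Y|Q}` be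
the recalibrated prediction. Then `I(Y; X | Q̃) = I(Y; X | Q)`. -/
theorem recalibration_preserves_sharpness
    {Ω 𝒳 𝒴 : Type*} [MeasurableSpace Ω] [StandardBorelSpace Ω] [Nonempty Ω]
    [MeasurableSpace 𝒳] [MeasurableSpace 𝒴] [StandardBorelSpace 𝒴] [Nonempty 𝒴]
    (μ : Measure Ω) [IsProbabilityMeasure μ]
    (S : Measure 𝒴 → 𝒴 → ℝ)
    (X : Ω → 𝒳) (Y : Ω → 𝒴) (Q : Ω → Measure 𝒴)
    (hX : Measurable X) (hY : Measurable Y) (hQ : Measurable Q)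
    (hQprob : ∀ ω, IsProbabilityMeasure (Q ω))
    -- `Y` and `Q` are conditionally independent given `X`
    (hCI : CondIndepFun (MeasurableSpace.comap X inferInstance) hX.comap_le Y Q μ)
    (Qt : Ω → Measure 𝒴)
    (hQt : ∀ ω, Qt ω = condDistrib Y Q μ (Q ω))
    -- all integrals appearing are assumed to be well defined and finite
    (hint_entQ : Integrable (fun ω => gEntropy S (condDistrib Y Q μ (Q ω))) μ)
    (hint_entXQ : Integrable
      (fun ω => gEntropy S (condDistrib Y (fun ω' => (X ω', Q ω')) μ (X ω, Q ω))) μ)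
    (hint_entQt : Integrable (fun ω => gEntropy S (condDistrib Y Qt μ (Qt ω))) μ)
    (hint_entXQt : Integrable
      (fun ω => gEntropy S (condDistrib Y (fun ω' => (X ω', Qt ω')) μ (X ω, Qt ω))) μ) :
    gCondMutualInfo S μ Y X Qt = gCondMutualInfo S μ Y X Q :=
  recalibration_preserves_sharpness_general μ S X Y Q hX hY hQ hCI Qt hQt
end
end

section
/- Monotonicity of generalized entropy under conditioning: Let S be a proper scoring rule with induced generalized entropy H, and let ξ and η be jointly distributed random variables, with ξ taking values in the measurable space Y. Then H(P_ξ) ≥ E_η[H(P_{ξ|η})], where P_ξ is the marginal distribution of ξ and P_{ξ|η} is a regular conditional distribution of ξ given η. -/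
open MeasureTheory ProbabilityTheory

noncomputable section

/-- **Monotonicity of generalized entropy under conditioning.**
For a proper scoring rule `S` and jointly distributed random variables `ξ` (with values in a
standard Borel space) and `η`, one has `H(P_ξ) ≥ E_η[H(P_{ξ|η})]`. -/
theorem gEntropy_monotone_under_conditioning
    {Ω 𝒴 𝒵 : Type*} [MeasurableSpace Ω] [MeasurableSpace 𝒵]
    [MeasurableSpace 𝒴] [StandardBorelSpace 𝒴] [Nonempty 𝒴]
    (μ : Measure Ω) [IsProbabilityMeasure μ]
    (S : Measure 𝒴 → 𝒴 → ℝ) (hS : IsProper S)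
    (ξ : Ω → 𝒴) (η : Ω → 𝒵)
    (hξ : Measurable ξ) (hη : Measurable η)
    -- all integrals appearing are assumed to be well defined and finite
    (hint_marg : Integrable (fun y => S (μ.map ξ) y) (μ.map ξ))
    (hint_cond : Integrable (fun ω => gEntropy S (condDistrib ξ η μ (η ω))) μ)
    (hint_cross : Integrable
      (fun ω => ∫ y, S (μ.map ξ) y ∂(condDistrib ξ η μ (η ω))) μ) :
    ∫ ω, gEntropy S (condDistrib ξ η μ (η ω)) ∂μ ≤ gEntropy S (μ.map ξ) := by
  have hmargP : IsProbabilityMeasure (μ.map ξ) := Measure.isProbabilityMeasure_map hξ.aemeasurable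
  -- Step 1: pointwise inequality from properness
  have h1 : ∫ ω, gEntropy S (condDistrib ξ η μ (η ω)) ∂μ ≤
      ∫ ω, ∫ y, S (μ.map ξ) y ∂(condDistrib ξ η μ (η ω)) ∂μ := by
    refine integral_mono hint_cond hint_cross (fun ω => ?_)
    exact hS _ _ inferInstance hmargP
  refine h1.trans_eq ?_
  -- Step 2: the cross term equals the marginal entropy, by disintegration
  set ρ : Measure (𝒵 × 𝒴) := μ.map (fun a => (η a, ξ a)) with hρ
  have hρP : IsProbabilityMeasure ρ :=
    Measure.isProbabilityMeasure_map (hη.prodMk hξ).aemeasurable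
  have hfst : ρ.fst = μ.map η := Measure.fst_map_prodMk hξ
  have hsnd : ρ.snd = μ.map ξ := Measure.snd_map_prodMk hη
  have hcond : condDistrib ξ η μ = ρ.condKernel := by rw [condDistrib]
  have hg_int : Integrable (fun p : 𝒵 × 𝒴 => S (μ.map ξ) p.2) ρ := by
    have : Integrable (fun y => S (μ.map ξ) y) ρ.snd := hsnd ▸ hint_marg
    exact (integrable_map_measure (hsnd ▸ hint_marg.1)
      measurable_snd.aemeasurable).mp this
  have hmeas : AEStronglyMeasurable
      (fun b => ∫ y, S (μ.map ξ) y ∂(condDistrib ξ η μ b)) (μ.map η) := by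
    refine MeasureTheory.AEStronglyMeasurable.integral_condDistrib_map hξ.aemeasurable
      (f := fun p : 𝒵 × 𝒴 => S (μ.map ξ) p.2) ?_
    exact hg_int.1
  calc ∫ ω, ∫ y, S (μ.map ξ) y ∂(condDistrib ξ η μ (η ω)) ∂μ
      = ∫ b, ∫ y, S (μ.map ξ) y ∂(condDistrib ξ η μ b) ∂(μ.map η) :=
        (integral_map hη.aemeasurable hmeas).symm
    _ = ∫ b, ∫ y, S (μ.map ξ) y ∂(ρ.condKernel b) ∂ρ.fst := by rw [hfst, hcond]
    _ = ∫ p, S (μ.map ξ) p.2 ∂(ρ.fst ⊗ₘ ρ.condKernel) := by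
        have hdis : ρ.fst ⊗ₘ ρ.condKernel = ρ := ρ.disintegrate ρ.condKernel
        rw [Measure.integral_compProd (hdis.symm ▸ hg_int)]
    _ = ∫ p, S (μ.map ξ) p.2 ∂ρ := by rw [ρ.disintegrate ρ.condKernel]
    _ = ∫ y, S (μ.map ξ) y ∂ρ.snd :=
        (integral_map measurable_snd.aemeasurable (hsnd ▸ hint_marg.1)).symm
    _ = gEntropy S (μ.map ξ) := by rw [hsnd]; rfl
end
end

section
/- Characterization of independence via generalized entropy: Let S be a strictly proper scoring rule with induced generalized entropy H, and let ξ and η be jointly distributed random variables with ξ taking values in the measurable space Y. Then H(P_ξ) = E_η[H(P_{ξ|η})] holds if and only if ξ and η are independent, where P_ξ is the marginal distribution of ξ and P_{ξ|η} is a regular conditional distribution of ξ given η. -/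
open MeasureTheory ProbabilityTheory

noncomputable section

/-!
Disintegrating `P_ξ` along `η` writes `H(P_ξ) = ∫ S(P_ξ, y) dP_ξ(y)` as the expectation over `η`
of the cross score `∫ S(P_ξ, y) dP_{ξ|η}(y)`. Propriety bounds `H(P_{ξ|η})` pointwise by this
cross score, so the two expectations agree iff the integrands agree almost surely, which by strict
propriety means `P_{ξ|η} = P_ξ` almost surely, i.e. `ξ` and `η` are independent.
-/

open Filter

namespace MeasureTheory.Measure

variable {α β E : Type*} [MeasurableSpace α] [MeasurableSpace β] [NormedAddCommGroup E]
  [NormedSpace ℝ E] {μ : Measure α} {κ : Kernel α β} {f : β → E}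

lemma integral_comp (hf : Integrable f (κ ∘ₘ μ)) :
    ∫ y, f y ∂(κ ∘ₘ μ) = ∫ x, ∫ y, f y ∂κ x ∂μ := by
  rw [comp_eq_comp_const_apply] at hf ⊢
  rw [Kernel.integral_comp hf, Kernel.const_apply]

lemma integrable_integral_of_integrable_comp (hf : Integrable f (κ ∘ₘ μ)) :
    Integrable (fun x ↦ ∫ y, f y ∂κ x) μ := by
  rw [comp_eq_comp_const_apply] at hf
  simpa using hf.integral_comp

end MeasureTheory.Measure

namespace ProbabilityTheory

variable {α β Ω E : Type*} [MeasurableSpace α] [MeasurableSpace β] [MeasurableSpace Ω]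
  [StandardBorelSpace Ω] [Nonempty Ω] [NormedAddCommGroup E] [NormedSpace ℝ E]
  {μ : Measure α} [IsFiniteMeasure μ] {X : α → β} {Y : α → Ω}

lemma integrable_integral_condDistrib_of_integrable_map (hX : AEMeasurable X μ)
    (hY : AEMeasurable Y μ) {f : Ω → E} (hf : Integrable f (μ.map Y)) :
    Integrable (fun a ↦ ∫ y, f y ∂condDistrib Y X μ (X a)) μ := by
  rw [← condDistrib_comp_map hX hY] at hf
  exact (Measure.integrable_integral_of_integrable_comp hf).comp_aemeasurable hX

lemma integral_map_eq_integral_condDistrib (hX : AEMeasurable X μ) (hY : AEMeasurable Y μ)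
    {f : Ω → E} (hf : Integrable f (μ.map Y)) :
    ∫ y, f y ∂(μ.map Y) = ∫ a, ∫ y, f y ∂condDistrib Y X μ (X a) ∂μ := by
  rw [← condDistrib_comp_map hX hY] at hf ⊢
  rw [Measure.integral_comp hf, integral_map hX
    (Measure.integrable_integral_of_integrable_comp hf).aestronglyMeasurable]

lemma IndepFun.ae_condDistrib_eq (hX : AEMeasurable X μ) (hY : AEMeasurable Y μ)
    (h : IndepFun Y X μ) : ∀ᵐ a ∂μ, condDistrib Y X μ (X a) = μ.map Y := by
  have hmap : μ.map (fun a ↦ (X a, Y a)) = μ.map X ⊗ₘ Kernel.const β (μ.map Y) := by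
    rw [Measure.compProd_const, ← indepFun_iff_map_prod_eq_prod_map_map hX hY]
    exact h.symm
  exact ae_of_ae_map hX (condDistrib_ae_eq_of_measure_eq_compProd X hY hmap)

lemma indepFun_of_ae_condDistrib_eq (hX : Measurable X) (hY : AEMeasurable Y μ)
    (h : ∀ᵐ a ∂μ, condDistrib Y X μ (X a) = μ.map Y) : IndepFun Y X μ := by
  rw [indepFun_iff_measure_inter_preimage_eq_mul]
  intro s t hs ht
  calc μ (Y ⁻¹' s ∩ X ⁻¹' t)
      = ∫⁻ a in X ⁻¹' t, condDistrib Y X μ (X a) s ∂μ := by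
        rw [setLIntegral_preimage_condDistrib hX hY hs ht, Set.inter_comm]
    _ = ∫⁻ _ in X ⁻¹' t, μ.map Y s ∂μ :=
        setLIntegral_congr_fun_ae (hX ht) (h.mono fun a ha _ ↦ by rw [ha])
    _ = μ (Y ⁻¹' s) * μ (X ⁻¹' t) := by
        rw [setLIntegral_const, Measure.map_apply_of_aemeasurable hY hs]

lemma indepFun_iff_ae_condDistrib_eq (hX : Measurable X) (hY : AEMeasurable Y μ) :
    IndepFun Y X μ ↔ ∀ᵐ a ∂μ, condDistrib Y X μ (X a) = μ.map Y :=
  ⟨IndepFun.ae_condDistrib_eq hX.aemeasurable hY, indepFun_of_ae_condDistrib_eq hX hY⟩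

end ProbabilityTheory

section StrictlyProper

variable {𝒴 : Type*} [MeasurableSpace 𝒴] {S : Measure 𝒴 → 𝒴 → ℝ}

lemma IsStrictlyProper.gEntropy_eq_iff (hS : IsStrictlyProper S) {p q : Measure 𝒴}
    [IsProbabilityMeasure p] [IsProbabilityMeasure q] :
    gEntropy S q = ∫ y, S p y ∂q ↔ q = p := by
  refine ⟨fun h ↦ ?_, fun h ↦ h ▸ rfl⟩
  by_contra hne
  exact (hS.2 q p ‹_› ‹_› (Ne.symm hne)).ne h

lemma IsStrictlyProper.integral_gEntropy_eq_iff (hS : IsStrictlyProper S) {Ω : Type*}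
    [MeasurableSpace Ω] {μ : Measure Ω} {q : Ω → Measure 𝒴} [∀ ω, IsProbabilityMeasure (q ω)]
    {p : Measure 𝒴} [IsProbabilityMeasure p] (hq : Integrable (fun ω ↦ gEntropy S (q ω)) μ)
    (hqp : Integrable (fun ω ↦ ∫ y, S p y ∂q ω) μ) :
    ∫ ω, gEntropy S (q ω) ∂μ = ∫ ω, ∫ y, S p y ∂q ω ∂μ ↔ ∀ᵐ ω ∂μ, q ω = p := by
  rw [integral_eq_iff_of_ae_le hq hqp (ae_of_all _ fun ω ↦ hS.1 _ _ inferInstance inferInstance)]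
  exact eventually_congr (ae_of_all _ fun ω ↦ hS.gEntropy_eq_iff)

end StrictlyProper

theorem gEntropy_eq_iff_indepFun_general
    {Ω 𝒴 𝒵 : Type*} [MeasurableSpace Ω] [MeasurableSpace 𝒵]
    [MeasurableSpace 𝒴] [StandardBorelSpace 𝒴] [Nonempty 𝒴]
    (μ : Measure Ω) [IsProbabilityMeasure μ]
    (S : Measure 𝒴 → 𝒴 → ℝ) (hS : IsStrictlyProper S)
    (ξ : Ω → 𝒴) (η : Ω → 𝒵)
    (hξ : Measurable ξ) (hη : Measurable η)
    -- all integrals appearing are assumed to be well defined and finite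
    (hint_marg : Integrable (fun y => S (μ.map ξ) y) (μ.map ξ))
    (hint_cond : Integrable (fun ω => gEntropy S (condDistrib ξ η μ (η ω))) μ) :
    gEntropy S (μ.map ξ) = ∫ ω, gEntropy S (condDistrib ξ η μ (η ω)) ∂μ
      ↔ IndepFun ξ η μ := by
  have : IsProbabilityMeasure (μ.map ξ) := Measure.isProbabilityMeasure_map hξ.aemeasurable
  rw [gEntropy, integral_map_eq_integral_condDistrib hη.aemeasurable hξ.aemeasurable hint_marg,
    eq_comm, hS.integral_gEntropy_eq_iff hint_cond
      (integrable_integral_condDistrib_of_integrable_map hη.aemeasurable hξ.aemeasurable hint_marg),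
    indepFun_iff_ae_condDistrib_eq hη hξ.aemeasurable]

/-- **Characterization of independence via generalized entropy.**
For a strictly proper scoring rule `S` and jointly distributed random variables `ξ` (with
values in a standard Borel space) and `η`, `H(P_ξ) = E_η[H(P_{ξ|η})]` holds if and only if
`ξ` and `η` are independent. -/
theorem gEntropy_eq_iff_indepFun
    {Ω 𝒴 𝒵 : Type*} [MeasurableSpace Ω] [MeasurableSpace 𝒵]
    [MeasurableSpace 𝒴] [StandardBorelSpace 𝒴] [Nonempty 𝒴]
    (μ : Measure Ω) [IsProbabilityMeasure μ]
    (S : Measure 𝒴 → 𝒴 → ℝ) (hS : IsStrictlyProper S)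
    (ξ : Ω → 𝒴) (η : Ω → 𝒵)
    (hξ : Measurable ξ) (hη : Measurable η)
    -- all integrals appearing are assumed to be well defined and finite
    (hint_marg : Integrable (fun y => S (μ.map ξ) y) (μ.map ξ))
    (hint_cond : Integrable (fun ω => gEntropy S (condDistrib ξ η μ (η ω))) μ)
    (hint_cross : Integrable
      (fun ω => ∫ y, S (μ.map ξ) y ∂(condDistrib ξ η μ (η ω))) μ) :
    gEntropy S (μ.map ξ) = ∫ ω, gEntropy S (condDistrib ξ η μ (η ω)) ∂μ
      ↔ IndepFun ξ η μ :=
  gEntropy_eq_iff_indepFun_general μ S hS ξ η hξ hη hint_marg hint_cond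
end
end

section
/- Nonnegativity of generalized mutual information: Let S be a strictly proper scoring rule with induced generalized entropy H, and let ξ and η be jointly distributed random variables with ξ taking values in the measurable space Y. Define the generalized mutual information I(ξ; η) = H(P_ξ) − E_η[H(P_{ξ|η})]. Then I(ξ; η) ≥ 0, and I(ξ; η) = 0 if and only if ξ and η are independent. -/
/-!
Write `d(p, q) = ∫ S(q, ·) dp - H(p)` for the excess score of forecasting `q` when the
truth is `p`. The law of total expectation `E_η[∫ S(P_ξ, ·) dP_{ξ|η}] = ∫ S(P_ξ, ·) dP_ξ` turns
`I(ξ; η)` into `E_η[d(P_{ξ|η}, P_ξ)]`. Propriety makes the integrand nonnegative, strict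
propriety makes it vanish exactly where `P_{ξ|η} = P_ξ`, and `P_{ξ|η} = P_ξ` almost surely is
independence.
-/

open MeasureTheory ProbabilityTheory

noncomputable section

/-- Generalized mutual information `I(ξ; η) = H(P_ξ) − E_η[H(P_{ξ|η})]` induced by the
generalized entropy of `S`. -/
def gMutualInfo {Ω 𝒴 𝒵 : Type*} [MeasurableSpace Ω] [MeasurableSpace 𝒵]
    [MeasurableSpace 𝒴] [StandardBorelSpace 𝒴] [Nonempty 𝒴]
    (S : Measure 𝒴 → 𝒴 → ℝ) (μ : Measure Ω) [IsFiniteMeasure μ]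
    (ξ : Ω → 𝒴) (η : Ω → 𝒵) : ℝ :=
  gEntropy S (μ.map ξ) - ∫ ω, gEntropy S (condDistrib ξ η μ (η ω)) ∂μ

section ScoringRule

variable {𝒴 : Type*} [MeasurableSpace 𝒴] {S : Measure 𝒴 → 𝒴 → ℝ}

def scoreDivergence (S : Measure 𝒴 → 𝒴 → ℝ) (p q : Measure 𝒴) : ℝ :=
  ∫ y, S q y ∂p - gEntropy S p

lemma IsProper.scoreDivergence_nonneg (hS : IsProper S) (p q : Measure 𝒴)
    [IsProbabilityMeasure p] [IsProbabilityMeasure q] : 0 ≤ scoreDivergence S p q :=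
  sub_nonneg.2 (hS p q inferInstance inferInstance)

lemma IsStrictlyProper.scoreDivergence_eq_zero_iff (hS : IsStrictlyProper S) (p q : Measure 𝒴)
    [IsProbabilityMeasure p] [IsProbabilityMeasure q] : scoreDivergence S p q = 0 ↔ p = q := by
  refine ⟨fun h => ?_, fun h => by rw [h, scoreDivergence, gEntropy, sub_self]⟩
  by_contra hpq
  exact (sub_pos.2 (hS.2 p q inferInstance inferInstance (Ne.symm hpq))).ne' h

end ScoringRule

section CondDistrib

variable {Ω 𝒴 𝒵 : Type*} [MeasurableSpace Ω] [MeasurableSpace 𝒵]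
  [MeasurableSpace 𝒴] [StandardBorelSpace 𝒴] [Nonempty 𝒴]
  {μ : Measure Ω} [IsFiniteMeasure μ] {ξ : Ω → 𝒴} {η : Ω → 𝒵}

lemma condExp_comap_ae_eq_integral_condDistrib {E : Type*} [NormedAddCommGroup E]
    [NormedSpace ℝ E] [CompleteSpace E] {f : 𝒴 → E}
    (hη : Measurable η) (hξ : AEMeasurable ξ μ) (hf : Integrable f (μ.map ξ)) :
    μ[f ∘ ξ | MeasurableSpace.comap η inferInstance]
      =ᵐ[μ] fun ω => ∫ y, f y ∂condDistrib ξ η μ (η ω) := by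
  have hsnd : MeasurePreserving Prod.snd (μ.map fun ω => (η ω, ξ ω)) (μ.map ξ) :=
    ⟨measurable_snd, by
      rw [AEMeasurable.map_map_of_aemeasurable measurable_snd.aemeasurable
        (hη.aemeasurable.prodMk hξ)]
      rfl⟩
  exact condExp_prod_ae_eq_integral_condDistrib₀ (f := fun z : 𝒵 × 𝒴 => f z.2) hη hξ
    (hf.1.comp_measurePreserving hsnd) ((integrable_map_measure hf.1 hξ).mp hf)

lemma integrable_integral_condDistrib {E : Type*} [NormedAddCommGroup E]
    [NormedSpace ℝ E] [CompleteSpace E] {f : 𝒴 → E}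
    (hη : Measurable η) (hξ : AEMeasurable ξ μ) (hf : Integrable f (μ.map ξ)) :
    Integrable (fun ω => ∫ y, f y ∂condDistrib ξ η μ (η ω)) μ :=
  integrable_condExp.congr (condExp_comap_ae_eq_integral_condDistrib hη hξ hf)

lemma integral_integral_condDistrib {E : Type*} [NormedAddCommGroup E]
    [NormedSpace ℝ E] [CompleteSpace E] {f : 𝒴 → E}
    (hη : Measurable η) (hξ : AEMeasurable ξ μ) (hf : Integrable f (μ.map ξ)) :
    ∫ ω, ∫ y, f y ∂condDistrib ξ η μ (η ω) ∂μ = ∫ y, f y ∂μ.map ξ := by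
  rw [← integral_congr_ae (condExp_comap_ae_eq_integral_condDistrib hη hξ hf),
    integral_condExp hη.comap_le, integral_map hξ hf.1]
  rfl

lemma indepFun_of_ae_condDistrib_eq_map (hξ : Measurable ξ) (hη : Measurable η)
    (h : ∀ᵐ ω ∂μ, condDistrib ξ η μ (η ω) = μ.map ξ) : IndepFun ξ η μ := by
  rw [indepFun_iff_measure_inter_preimage_eq_mul]
  intro s t hs ht
  have h_t : ∀ᵐ ω ∂μ.restrict (η ⁻¹' t), condDistrib ξ η μ (η ω) s = μ.map ξ s := by
    filter_upwards [ae_restrict_of_ae h] with ω hω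
    rw [hω]
  rw [Set.inter_comm, ← setLIntegral_preimage_condDistrib hη hξ.aemeasurable hs ht,
    lintegral_congr_ae h_t, setLIntegral_const, Measure.map_apply hξ hs, mul_comm]

lemma IndepFun.ae_condDistrib_eq_map (hξ : Measurable ξ) (hη : Measurable η)
    (h : IndepFun ξ η μ) : ∀ᵐ ω ∂μ, condDistrib ξ η μ (η ω) = μ.map ξ := by
  have h_joint : μ.map (fun ω => (η ω, ξ ω)) = μ.map η ⊗ₘ Kernel.const 𝒵 (μ.map ξ) := by
    rw [Measure.compProd_const,
      ← indepFun_iff_map_prod_eq_prod_map_map hη.aemeasurable hξ.aemeasurable]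
    exact h.symm
  exact ae_of_ae_map hη.aemeasurable
    (condDistrib_ae_eq_of_measure_eq_compProd_of_measurable hη hξ h_joint)

lemma indepFun_iff_ae_condDistrib_eq_map (hξ : Measurable ξ) (hη : Measurable η) :
    IndepFun ξ η μ ↔ ∀ᵐ ω ∂μ, condDistrib ξ η μ (η ω) = μ.map ξ :=
  ⟨IndepFun.ae_condDistrib_eq_map hξ hη, indepFun_of_ae_condDistrib_eq_map hξ hη⟩

variable {S : Measure 𝒴 → 𝒴 → ℝ}

lemma gMutualInfo_eq_integral_scoreDivergence (hξ : AEMeasurable ξ μ) (hη : Measurable η)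
    (hint_marg : Integrable (fun y => S (μ.map ξ) y) (μ.map ξ))
    (hint_cond : Integrable (fun ω => gEntropy S (condDistrib ξ η μ (η ω))) μ) :
    gMutualInfo S μ ξ η = ∫ ω, scoreDivergence S (condDistrib ξ η μ (η ω)) (μ.map ξ) ∂μ := by
  rw [gMutualInfo, gEntropy, ← integral_integral_condDistrib hη hξ hint_marg,
    ← integral_sub (integrable_integral_condDistrib hη hξ hint_marg) hint_cond]
  rfl

end CondDistrib

theorem gMutualInfo_nonneg_and_eq_zero_iff_indepFun_general
    {Ω 𝒴 𝒵 : Type*} [MeasurableSpace Ω] [MeasurableSpace 𝒵]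
    [MeasurableSpace 𝒴] [StandardBorelSpace 𝒴] [Nonempty 𝒴]
    (μ : Measure Ω) [IsProbabilityMeasure μ]
    (S : Measure 𝒴 → 𝒴 → ℝ) (hS : IsStrictlyProper S)
    (ξ : Ω → 𝒴) (η : Ω → 𝒵)
    (hξ : Measurable ξ) (hη : Measurable η)
    -- all integrals appearing are assumed to be well defined and finite
    (hint_marg : Integrable (fun y => S (μ.map ξ) y) (μ.map ξ))
    (hint_cond : Integrable (fun ω => gEntropy S (condDistrib ξ η μ (η ω))) μ) :
    0 ≤ gMutualInfo S μ ξ η ∧ (gMutualInfo S μ ξ η = 0 ↔ IndepFun ξ η μ) := by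
  have : IsProbabilityMeasure (μ.map ξ) := Measure.isProbabilityMeasure_map hξ.aemeasurable
  set d := fun ω => scoreDivergence S (condDistrib ξ η μ (η ω)) (μ.map ξ)
  have hd_nonneg : 0 ≤ d := fun ω => hS.1.scoreDivergence_nonneg _ _
  have hd_int : Integrable d μ :=
    (integrable_integral_condDistrib hη hξ.aemeasurable hint_marg).sub hint_cond
  rw [gMutualInfo_eq_integral_scoreDivergence hξ.aemeasurable hη hint_marg hint_cond,
    integral_eq_zero_iff_of_nonneg hd_nonneg hd_int, indepFun_iff_ae_condDistrib_eq_map hξ hη]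
  exact ⟨integral_nonneg hd_nonneg,
    Filter.eventually_congr (ae_of_all _ fun ω => hS.scoreDivergence_eq_zero_iff _ _)⟩

/-- **Nonnegativity of generalized mutual information.**
For a strictly proper scoring rule `S` and jointly distributed random variables `ξ` (with
values in a standard Borel space) and `η`, `I(ξ; η) ≥ 0`, with `I(ξ; η) = 0` if and only if
`ξ` and `η` are independent. -/
theorem gMutualInfo_nonneg_and_eq_zero_iff_indepFun
    {Ω 𝒴 𝒵 : Type*} [MeasurableSpace Ω] [MeasurableSpace 𝒵]
    [MeasurableSpace 𝒴] [StandardBorelSpace 𝒴] [Nonempty 𝒴]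
    (μ : Measure Ω) [IsProbabilityMeasure μ]
    (S : Measure 𝒴 → 𝒴 → ℝ) (hS : IsStrictlyProper S)
    (ξ : Ω → 𝒴) (η : Ω → 𝒵)
    (hξ : Measurable ξ) (hη : Measurable η)
    -- all integrals appearing are assumed to be well defined and finite
    (hint_marg : Integrable (fun y => S (μ.map ξ) y) (μ.map ξ))
    (hint_cond : Integrable (fun ω => gEntropy S (condDistrib ξ η μ (η ω))) μ)
    (hint_cross : Integrable
      (fun ω => ∫ y, S (μ.map ξ) y ∂(condDistrib ξ η μ (η ω))) μ) :
    0 ≤ gMutualInfo S μ ξ η ∧ (gMutualInfo S μ ξ η = 0 ↔ IndepFun ξ η μ) :=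
  gMutualInfo_nonneg_and_eq_zero_iff_indepFun_general μ S hS ξ η hξ hη hint_marg hint_cond
end
end

section
/- Nonnegativity and identity of indiscernibles for the energy distance: Let X and Y be integrable real random variables, with X′ an independent copy of X and Y′ an independent copy of Y, and (X, X′) independent of (Y, Y′). Then the energy distance 2 E|X − Y| − E|X − X′| − E|Y − Y′| is nonnegative, and it equals zero if and only if X and Y have the same distribution. (Equivalently, the CRPS is a strictly proper scoring rule on probability measures on ℝ with finite first moment.) -/
/-!
For independent `U ∼ ν` and `V ∼ ρ` on `ℝ`, writing `|U - V|` as the length of the interval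
between them and applying Tonelli gives `E|U - V| = ∫ F(t)(1 - G(t)) + (1 - F(t))G(t) dt`, where
`F`, `G` are the distribution functions. Combining the three expectations, the energy distance
becomes `2 ∫ (F - G)² dt`: it is nonnegative, and it vanishes iff `F = G` almost everywhere,
hence everywhere by right continuity, i.e. iff `ν = ρ`.
-/

open MeasureTheory ProbabilityTheory Set
open scoped ENNReal

theorem eq_of_ae_eq_of_continuousWithinAt_Ici {X Y : Type*} [TopologicalSpace X] [LinearOrder X]
    [OrderTopology X] [DenselyOrdered X] [NoMaxOrder X] [MeasurableSpace X] {μ : Measure X}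
    [μ.IsOpenPosMeasure] [TopologicalSpace Y] [T2Space Y] {f g : X → Y} (hfg : f =ᵐ[μ] g)
    (hf : ∀ x, ContinuousWithinAt f (Ici x) x) (hg : ∀ x, ContinuousWithinAt g (Ici x) x) :
    f = g := by
  funext x
  -- the points where `f` and `g` agree are dense, so they accumulate at `x` from the right
  set s := Ioi x ∩ {y | f y = g y}
  have hx : x ∈ closure s := by
    have hs : Ioi x ⊆ closure s := (μ.dense_of_ae hfg).open_subset_closure_inter isOpen_Ioi
    exact closure_minimal hs isClosed_closure (closure_Ioi x ▸ mem_Ici.2 le_rfl)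
  have hsub : s ⊆ Ici x := fun y hy => le_of_lt hy.1
  exact isClosed_diagonal.closure_subset
    ((((hf x).mono hsub).prodMk ((hg x).mono hsub)).mem_closure hx fun y hy => hy.2)

theorem ofReal_abs_sub_eq_lintegral_indicator (p : ℝ × ℝ) :
    ENNReal.ofReal |p.1 - p.2| = ∫⁻ t, (Iic t ×ˢ Ioi t ∪ Ioi t ×ˢ Iic t).indicator 1 p := by
  obtain ⟨x, y⟩ := p
  have hset : ∀ t, (Iic t ×ˢ Ioi t ∪ Ioi t ×ˢ Iic t).indicator (1 : ℝ × ℝ → ℝ≥0∞) (x, y)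
      = (Ico x y ∪ Ico y x).indicator 1 t := by
    intro t
    simp only [indicator, mem_union, mem_prod, mem_Iic, mem_Ioi, mem_Ico, Pi.one_apply]
    congr 1
    exact propext (by tauto)
  simp_rw [hset]
  rw [lintegral_indicator_one (measurableSet_Ico.union measurableSet_Ico)]
  rcases le_total x y with h | h
  · rw [Ico_eq_empty (not_lt.2 h), union_empty, Real.volume_Ico, abs_sub_comm,
      abs_of_nonneg (sub_nonneg.2 h)]
  · rw [Ico_eq_empty (not_lt.2 h), empty_union, Real.volume_Ico, abs_of_nonneg (sub_nonneg.2 h)]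

theorem lintegral_ofReal_abs_sub_prod (ν ρ : Measure ℝ) [SFinite ν] [SFinite ρ] :
    ∫⁻ p, ENNReal.ofReal |p.1 - p.2| ∂(ν.prod ρ)
      = ∫⁻ t, ν (Iic t) * ρ (Ioi t) + ν (Ioi t) * ρ (Iic t) := by
  have hmeas :
      MeasurableSet {q : (ℝ × ℝ) × ℝ | q.1 ∈ Iic q.2 ×ˢ Ioi q.2 ∪ Ioi q.2 ×ˢ Iic q.2} := by
    simp only [mem_union, mem_prod, mem_Iic, mem_Ioi, ofPred_or]
    measurability
  simp_rw [ofReal_abs_sub_eq_lintegral_indicator]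
  rw [lintegral_lintegral_swap (f := fun p t => (Iic t ×ˢ Ioi t ∪ Ioi t ×ˢ Iic t).indicator 1 p)
    (measurable_one.indicator hmeas).aemeasurable]
  refine lintegral_congr fun t => ?_
  have hdisj : Disjoint (Iic t ×ˢ Ioi t) (Ioi t ×ˢ Iic t) :=
    disjoint_left.2 fun p h1 h2 => (lt_irrefl t) (h2.1.trans_le h1.1)
  rw [lintegral_indicator_one ((measurableSet_Iic.prod measurableSet_Ioi).union
      (measurableSet_Ioi.prod measurableSet_Iic)),
    measure_union hdisj (measurableSet_Ioi.prod measurableSet_Iic),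
    Measure.prod_prod, Measure.prod_prod]

theorem measure_Ioi_eq_ofReal_one_sub_cdf (ν : Measure ℝ) [IsProbabilityMeasure ν] (t : ℝ) :
    ν (Ioi t) = ENNReal.ofReal (1 - cdf ν t) := by
  rw [← compl_Iic, prob_compl_eq_one_sub measurableSet_Iic, ← ofReal_cdf, ← ENNReal.ofReal_one,
    ENNReal.ofReal_sub _ (cdf_nonneg ν t)]

/-- For probability measures, the probability `P(U ≤ t < V) + P(V ≤ t < U)` that `t` separates
independent samples `U ∼ ν` and `V ∼ ρ`. -/
noncomputable def separationProb (ν ρ : Measure ℝ) (t : ℝ) : ℝ :=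
  cdf ν t * (1 - cdf ρ t) + (1 - cdf ν t) * cdf ρ t

theorem one_sub_cdf_nonneg (ν : Measure ℝ) (t : ℝ) : 0 ≤ 1 - cdf ν t :=
  sub_nonneg.2 (cdf_le_one ν t)

theorem separationProb_nonneg (ν ρ : Measure ℝ) (t : ℝ) : 0 ≤ separationProb ν ρ t :=
  add_nonneg (mul_nonneg (cdf_nonneg ν t) (one_sub_cdf_nonneg ρ t))
    (mul_nonneg (one_sub_cdf_nonneg ν t) (cdf_nonneg ρ t))

theorem measurable_separationProb (ν ρ : Measure ℝ) : Measurable (separationProb ν ρ) := by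
  have hν := (cdf ν).mono.measurable
  have hρ := (cdf ρ).mono.measurable
  unfold separationProb
  fun_prop

noncomputable def energyDistance (ν ρ : Measure ℝ) : ℝ :=
  2 * ∫ p, |p.1 - p.2| ∂(ν.prod ρ) - ∫ p, |p.1 - p.2| ∂(ν.prod ν) - ∫ p, |p.1 - p.2| ∂(ρ.prod ρ)

theorem two_mul_separationProb_sub (ν ρ : Measure ℝ) (t : ℝ) :
    2 * separationProb ν ρ t - separationProb ν ν t - separationProb ρ ρ t
      = 2 * (cdf ν t - cdf ρ t) ^ 2 := by
  unfold separationProb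
  ring

section

variable {ν ρ : Measure ℝ} [IsProbabilityMeasure ν] [IsProbabilityMeasure ρ]

theorem lintegral_ofReal_abs_sub_prod_eq_separationProb :
    ∫⁻ p, ENNReal.ofReal |p.1 - p.2| ∂(ν.prod ρ)
      = ∫⁻ t, ENNReal.ofReal (separationProb ν ρ t) := by
  rw [lintegral_ofReal_abs_sub_prod]
  refine lintegral_congr fun t => ?_
  have hF := cdf_nonneg ν t
  have hG := cdf_nonneg ρ t
  have hF' := one_sub_cdf_nonneg ν t
  have hG' := one_sub_cdf_nonneg ρ t
  rw [← ofReal_cdf ν, ← ofReal_cdf ρ, measure_Ioi_eq_ofReal_one_sub_cdf,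
    measure_Ioi_eq_ofReal_one_sub_cdf, ← ENNReal.ofReal_mul hF, ← ENNReal.ofReal_mul hF',
    ← ENNReal.ofReal_add (mul_nonneg hF hG') (mul_nonneg hF' hG), separationProb]

theorem integrable_abs_sub_prod (hν : Integrable id ν) (hρ : Integrable id ρ) :
    Integrable (fun p : ℝ × ℝ => |p.1 - p.2|) (ν.prod ρ) :=
  ((hν.comp_fst ρ).sub (hρ.comp_snd ν)).abs

theorem integrable_separationProb (hν : Integrable id ν) (hρ : Integrable id ρ) :
    Integrable (separationProb ν ρ) := by
  refine ⟨(measurable_separationProb ν ρ).aestronglyMeasurable, ?_⟩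
  rw [hasFiniteIntegral_iff_ofReal (ae_of_all _ (separationProb_nonneg ν ρ)),
    ← lintegral_ofReal_abs_sub_prod_eq_separationProb]
  exact (hasFiniteIntegral_iff_ofReal (ae_of_all _ fun _ => abs_nonneg _)).1
    (integrable_abs_sub_prod hν hρ).hasFiniteIntegral

theorem integral_abs_sub_prod_eq_integral_separationProb (hν : Integrable id ν)
    (hρ : Integrable id ρ) :
    ∫ p, |p.1 - p.2| ∂(ν.prod ρ) = ∫ t, separationProb ν ρ t := by
  rw [← ENNReal.ofReal_eq_ofReal_iff (integral_nonneg fun _ => abs_nonneg _)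
      (integral_nonneg (separationProb_nonneg ν ρ)),
    ofReal_integral_eq_lintegral_ofReal (integrable_abs_sub_prod hν hρ)
      (ae_of_all _ fun _ => abs_nonneg _),
    ofReal_integral_eq_lintegral_ofReal (integrable_separationProb hν hρ)
      (ae_of_all _ (separationProb_nonneg ν ρ)),
    lintegral_ofReal_abs_sub_prod_eq_separationProb]

theorem integrable_two_mul_sq_cdf_sub (hν : Integrable id ν) (hρ : Integrable id ρ) :
    Integrable (fun t => 2 * (cdf ν t - cdf ρ t) ^ 2) := by
  simp_rw [← two_mul_separationProb_sub]
  exact (((integrable_separationProb hν hρ).const_mul 2).sub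
    (integrable_separationProb hν hν)).sub (integrable_separationProb hρ hρ)

theorem energyDistance_eq_integral_sq_cdf_sub (hν : Integrable id ν) (hρ : Integrable id ρ) :
    energyDistance ν ρ = ∫ t, 2 * (cdf ν t - cdf ρ t) ^ 2 := by
  have h₁ := (integrable_separationProb hν hρ).const_mul 2
  have h₂ := integrable_separationProb hν hν
  have h₃ := integrable_separationProb hρ hρ
  simp_rw [← two_mul_separationProb_sub]
  rw [integral_sub (f := fun t => 2 * separationProb ν ρ t - separationProb ν ν t) (h₁.sub h₂) h₃,
    integral_sub h₁ h₂, integral_const_mul, energyDistance,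
    integral_abs_sub_prod_eq_integral_separationProb hν hρ,
    integral_abs_sub_prod_eq_integral_separationProb hν hν,
    integral_abs_sub_prod_eq_integral_separationProb hρ hρ]

theorem energyDistance_nonneg (hν : Integrable id ν) (hρ : Integrable id ρ) :
    0 ≤ energyDistance ν ρ := by
  rw [energyDistance_eq_integral_sq_cdf_sub hν hρ]
  exact integral_nonneg fun t => by positivity

theorem energyDistance_eq_zero_iff (hν : Integrable id ν) (hρ : Integrable id ρ) :
    energyDistance ν ρ = 0 ↔ ν = ρ := by
  refine ⟨fun h => ?_, fun h => by rw [energyDistance_eq_integral_sq_cdf_sub hν hρ, h]; simp⟩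
  rw [energyDistance_eq_integral_sq_cdf_sub hν hρ, integral_eq_zero_iff_of_nonneg
    (fun t => by positivity) (integrable_two_mul_sq_cdf_sub hν hρ)] at h
  have hae : (cdf ν : ℝ → ℝ) =ᵐ[volume] cdf ρ := by
    filter_upwards [h] with t ht
    simpa [sub_eq_zero] using ht
  exact Measure.eq_of_cdf ν ρ <| StieltjesFunction.ext <| congrFun <|
    eq_of_ae_eq_of_continuousWithinAt_Ici hae (cdf ν).right_continuous (cdf ρ).right_continuous

end

theorem ProbabilityTheory.IndepFun.integral_abs_sub_eq {Ω : Type*} [MeasurableSpace Ω]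
    {μ : Measure Ω} [IsFiniteMeasure μ] {U V : Ω → ℝ} (hUV : IndepFun U V μ)
    (hU : AEMeasurable U μ) (hV : AEMeasurable V μ) :
    ∫ ω, |U ω - V ω| ∂μ = ∫ p, |p.1 - p.2| ∂((μ.map U).prod (μ.map V)) := by
  have hcont : Continuous fun p : ℝ × ℝ => |p.1 - p.2| := by fun_prop
  rw [← hUV.map_prod_eq_prod_map_map hU hV,
    integral_map (hU.prodMk hV) hcont.aestronglyMeasurable]

theorem energy_distance_nonneg_and_eq_zero_iff_general
    {Ω : Type*} [MeasurableSpace Ω]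
    (μ : Measure Ω) [IsProbabilityMeasure μ]
    (X X' Y Y' : Ω → ℝ)
    (hXint : Integrable X μ) (hYint : Integrable Y μ)
    -- `X'` is an independent copy of `X`, `Y'` an independent copy of `Y`
    (hXid : IdentDistrib X X' μ μ) (hXindep : IndepFun X X' μ)
    (hYid : IdentDistrib Y Y' μ μ) (hYindep : IndepFun Y Y' μ)
    -- `(X, X')` independent of `(Y, Y')`
    (hXY : IndepFun (fun ω => (X ω, X' ω)) (fun ω => (Y ω, Y' ω)) μ) :
    0 ≤ 2 * ∫ ω, |X ω - Y ω| ∂μ - ∫ ω, |X ω - X' ω| ∂μ - ∫ ω, |Y ω - Y' ω| ∂μ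
    ∧ (2 * ∫ ω, |X ω - Y ω| ∂μ - ∫ ω, |X ω - X' ω| ∂μ - ∫ ω, |Y ω - Y' ω| ∂μ = 0
        ↔ μ.map X = μ.map Y) := by
  have hX := hXint.aemeasurable
  have hY := hYint.aemeasurable
  have : IsProbabilityMeasure (μ.map X) := Measure.isProbabilityMeasure_map hX
  have : IsProbabilityMeasure (μ.map Y) := Measure.isProbabilityMeasure_map hY
  have hXmom : Integrable id (μ.map X) :=
    (integrable_map_measure aestronglyMeasurable_id hX).2 hXint
  have hYmom : Integrable id (μ.map Y) :=
    (integrable_map_measure aestronglyMeasurable_id hY).2 hYint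
  have hXY' : IndepFun X Y μ := hXY.comp measurable_fst measurable_fst
  have hE : 2 * ∫ ω, |X ω - Y ω| ∂μ - ∫ ω, |X ω - X' ω| ∂μ - ∫ ω, |Y ω - Y' ω| ∂μ
      = energyDistance (μ.map X) (μ.map Y) := by
    rw [hXY'.integral_abs_sub_eq hX hY,
      hXindep.integral_abs_sub_eq hX hXid.aemeasurable_snd,
      hYindep.integral_abs_sub_eq hY hYid.aemeasurable_snd, ← hXid.map_eq, ← hYid.map_eq,
      energyDistance]
  rw [hE]
  exact ⟨energyDistance_nonneg hXmom hYmom, energyDistance_eq_zero_iff hXmom hYmom⟩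

/-- **Nonnegativity and identity of indiscernibles for the energy distance.**
For integrable real random variables `X, Y`, with `X′` an independent copy of `X`, `Y′` an
independent copy of `Y`, and `(X, X′)` independent of `(Y, Y′)`, the energy distance
`2 E|X − Y| − E|X − X′| − E|Y − Y′|` is nonnegative, and it is zero if and only if `X` and
`Y` have the same distribution. -/
theorem energy_distance_nonneg_and_eq_zero_iff
    {Ω : Type*} [MeasurableSpace Ω]
    (μ : Measure Ω) [IsProbabilityMeasure μ]
    (X X' Y Y' : Ω → ℝ)
    (hX : Measurable X) (hX' : Measurable X') (hY : Measurable Y) (hY' : Measurable Y')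
    (hXint : Integrable X μ) (hYint : Integrable Y μ)
    -- `X'` is an independent copy of `X`, `Y'` an independent copy of `Y`
    (hXid : IdentDistrib X X' μ μ) (hXindep : IndepFun X X' μ)
    (hYid : IdentDistrib Y Y' μ μ) (hYindep : IndepFun Y Y' μ)
    -- `(X, X')` independent of `(Y, Y')`
    (hXY : IndepFun (fun ω => (X ω, X' ω)) (fun ω => (Y ω, Y' ω)) μ) :
    0 ≤ 2 * ∫ ω, |X ω - Y ω| ∂μ - ∫ ω, |X ω - X' ω| ∂μ - ∫ ω, |Y ω - Y' ω| ∂μ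
    ∧ (2 * ∫ ω, |X ω - Y ω| ∂μ - ∫ ω, |X ω - X' ω| ∂μ - ∫ ω, |Y ω - Y' ω| ∂μ = 0
        ↔ μ.map X = μ.map Y) :=
  energy_distance_nonneg_and_eq_zero_iff_general μ X X' Y Y' hXint hYint hXid hXindep hYid hYindep
    hXY
end
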